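/- Let A = (a_{ij}) be an n×n matrix over a field K with all diagonal entries a_{ii} ≠ 0, let D = diag(a_{11}, …, a_{nn}), and set B = I + D^{−1} − D^{−1}A (so that B has diagonal entries a_{ii}^{−1} and off-diagonal entries B_{ij} = −a_{ii}^{−1}a_{ij}). Let π = π_1π_2⋯π_n be a permutation of {1, …, n} and let π^{[r]} = π_n π_{n−1}⋯π_1 denote its reversal. Then the linear SDS map F_{π_n}(A)·F_{π_{n−1}}(A)⋯F_{π_1}(A) is invertible, and its inverse equals the linear SDS map with local matrix B and update schedule π^{[r]}, namely (F_{π_n}(A)⋯F_{π_1}(A))^{−1} = F_{π_1}(B)·F_{π_2}(B)⋯F_{π_n}(B). -/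

import Mathlib

open Matrix

/-- `sdsF M i` is the matrix that agrees with the identity matrix in every row except
row `i`, whose `i`-th row equals the `i`-th row of `M`. -/
def sdsF {K : Type*} [Field K] {n : ℕ} (M : Matrix (Fin n) (Fin n) K) (i : Fin n) :
    Matrix (Fin n) (Fin n) K :=
  Matrix.of fun k j => if k = i then M k j else if k = j then 1 else 0

/-- The map of the linear SDS with local matrix `M` and permutation update schedule `σ`
(`σ k` being the `k`-th index updated, zero-indexed): the product
`F_{σ_n}(M) · F_{σ_{n-1}}(M) ⋯ F_{σ_1}(M)`. -/
def sdsMap {K : Type*} [Field K] {n : ℕ} (M : Matrix (Fin n) (Fin n) K)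
    (σ : Equiv.Perm (Fin n)) : Matrix (Fin n) (Fin n) K :=
  (((List.finRange n).reverse).map fun k => sdsF M (σ k)).prod

/-! `F_i(A)` replaces row `i` of the identity by `A i`; multiplying it on the left by `F_i(B)`
replaces that row by `B i + B i i • (A i - e_i)`, which is the unit row `e_i` exactly because
`B i = e_i + (A i i)⁻¹ • (e_i - A i)`. So `F_i(B) = F_i(A)⁻¹`, and the inverse of the product
`F_{π_n}(A) ⋯ F_{π_1}(A)` is the product of these inverses in the opposite order. -/

theorem Matrix.vecMul_updateRow {R m n : Type*} [Ring R] [Fintype m] [DecidableEq m]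
    (v : m → R) (M : Matrix m n R) (i : m) (r : n → R) :
    v ᵥ* M.updateRow i r = v ᵥ* M + v i • (r - M i) := by
  ext j
  have hsplit (N : Matrix m n R) :
      (v ᵥ* N) j = v i * N i j + ∑ l ∈ Finset.univ.erase i, v l * N l j :=
    (Finset.add_sum_erase _ (fun l => v l * N l j) (Finset.mem_univ i)).symm
  rw [Pi.add_apply, hsplit, hsplit, updateRow_self,
    Finset.sum_congr rfl fun l hl => by rw [updateRow_ne (Finset.ne_of_mem_erase hl)]]
  simp only [Pi.smul_apply, Pi.sub_apply, smul_eq_mul]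
  noncomm_ring

section

variable {K : Type*} [Field K] {n : ℕ}

def sdsInvLocal (A : Matrix (Fin n) (Fin n) K) : Matrix (Fin n) (Fin n) K :=
  1 + diagonal (fun i => (A i i)⁻¹) - diagonal (fun i => (A i i)⁻¹) * A

theorem sdsF_eq_updateRow (M : Matrix (Fin n) (Fin n) K) (i : Fin n) :
    sdsF M i = (1 : Matrix (Fin n) (Fin n) K).updateRow i (M i) := by
  ext k j
  rcases eq_or_ne k i with rfl | hki
  · simp [sdsF]
  · simp [sdsF, hki, one_apply]

theorem sdsInvLocal_row (A : Matrix (Fin n) (Fin n) K) (i : Fin n) :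
    sdsInvLocal A i =
      (1 : Matrix (Fin n) (Fin n) K) i + (A i i)⁻¹ • ((1 : Matrix (Fin n) (Fin n) K) i - A i) := by
  ext j
  simp only [sdsInvLocal, diagonal_mul, Matrix.sub_apply, Matrix.add_apply, diagonal_apply,
    one_apply, Pi.add_apply, Pi.smul_apply, Pi.sub_apply, smul_eq_mul]
  split_ifs <;> ring

theorem sdsF_sdsInvLocal_mul_sdsF {A : Matrix (Fin n) (Fin n) K} {i : Fin n} (hAi : A i i ≠ 0) :
    sdsF (sdsInvLocal A) i * sdsF A i = 1 := by
  have hdiag : sdsInvLocal A i i = (A i i)⁻¹ := by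
    simp [sdsInvLocal_row, mul_sub, hAi]
  rw [sdsF_eq_updateRow, sdsF_eq_updateRow, updateRow_mul, one_mul, updateRow_idem,
    vecMul_updateRow, vecMul_one, hdiag, sdsInvLocal_row]
  convert updateRow_eq_self (1 : Matrix (Fin n) (Fin n) K) i using 2
  module

theorem sdsMap_eq_prod_reverse (M : Matrix (Fin n) (Fin n) K) (σ : Equiv.Perm (Fin n)) :
    sdsMap M σ = ((List.finRange n).map fun k => sdsF M (σ k)).reverse.prod := by
  rw [sdsMap, List.map_reverse]

theorem sdsMap_revPerm_trans (M : Matrix (Fin n) (Fin n) K) (σ : Equiv.Perm (Fin n)) :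
    sdsMap M (Fin.revPerm.trans σ) = ((List.finRange n).map fun k => sdsF M (σ k)).prod := by
  simp [sdsMap, List.finRange_reverse, List.map_map, Function.comp_def]

end

theorem sdsMap_inverse_general {K : Type*} [Field K] {n : ℕ}
    (A : Matrix (Fin n) (Fin n) K) (hA : ∀ i : Fin n, A i i ≠ 0)
    (π : Equiv.Perm (Fin n)) :
    IsUnit (sdsMap A π) ∧
      (sdsMap A π)⁻¹ =
        sdsMap
          (1 + Matrix.diagonal (fun i => (A i i)⁻¹)
            - Matrix.diagonal (fun i => (A i i)⁻¹) * A)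
          (Fin.revPerm.trans π) := by
  change _ ∧ _ = sdsMap (sdsInvLocal A) _
  have hunit (i : Fin n) : IsUnit (sdsF A i) :=
    (isUnit_iff_isUnit_det _).2 (isUnit_det_of_left_inverse (sdsF_sdsInvLocal_mul_sdsF (hA i)))
  have hinv (i : Fin n) : (sdsF A i)⁻¹ = sdsF (sdsInvLocal A) i :=
    inv_eq_left_inv (sdsF_sdsInvLocal_mul_sdsF (hA i))
  rw [sdsMap_eq_prod_reverse, sdsMap_revPerm_trans, list_prod_inv_reverse, List.reverse_reverse,
    List.map_map]
  refine ⟨List.prod_isUnit ?_, ?_⟩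
  · simpa using fun k => hunit (π k)
  · simp only [Function.comp_def, hinv]

/-- **Inverse of an invertible linear SDS (Proposition on invertibility).**
Let `A` have nonzero diagonal entries, `D = Diag A`, and `B = I + D⁻¹ − D⁻¹ A`
(so `B i i = (A i i)⁻¹` and `B i j = −(A i i)⁻¹ · A i j` for `i ≠ j`).
Then the linear SDS map of `(A, π)` is invertible and its inverse is the linear SDS map
with local matrix `B` and the reversed update schedule `π^{[r]} = π_n π_{n-1} ⋯ π_1`,
i.e. `(F_{π_n}(A) ⋯ F_{π_1}(A))⁻¹ = F_{π_1}(B) · F_{π_2}(B) ⋯ F_{π_n}(B)`. -/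
theorem sdsMap_inverse {K : Type*} [Field K] {n : ℕ} (hn : 0 < n)
    (A : Matrix (Fin n) (Fin n) K) (hA : ∀ i : Fin n, A i i ≠ 0)
    (π : Equiv.Perm (Fin n)) :
    IsUnit (sdsMap A π) ∧
      (sdsMap A π)⁻¹ =
        sdsMap
          (1 + Matrix.diagonal (fun i => (A i i)⁻¹)
            - Matrix.diagonal (fun i => (A i i)⁻¹) * A)
          (Fin.revPerm.trans π) :=
  sdsMap_inverse_general A hA π
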